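/- arXiv:1810.11884 — 2 statements merged into one kernel-verified Lean document; each statement's English description precedes it below -/
import Mathlib

section
/- Let E ⊂ ℝ be measurable, let s⁻ < s be real numbers such that the indicator function χ_E is almost everywhere constant on the interval (s⁻, s), and let ρ > 0. Then ∫_{s⁻}^{s} |χ_E(u + ρ) - χ_E(u)| du ≤ min(ρ, s - s⁻). -/
/-!
On `(s⁻, s - ρ)` both `u` and `u + ρ` lie in `(s⁻, s)`, where `χ_E` is a.e. constant, so the
integrand vanishes a.e. there; only the last piece `(s - ρ, s)`, of length `ρ`, contributes.
Since the integrand is bounded by `1`, the integral is also at most the length `s - s⁻`.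
-/

open MeasureTheory Set

section ShiftDifference

variable {f : ℝ → ℝ} {M a b ρ : ℝ}

theorem intervalIntegrable_abs_sub_comp_add (hf : Measurable f) (hM : ∀ x y, |f x - f y| ≤ M)
    (a b ρ : ℝ) : IntervalIntegrable (fun u => |f (u + ρ) - f u|) volume a b := by
  refine (intervalIntegrable_const (c := M)).mono_fun'
    ((hf.comp (measurable_add_const ρ)).sub hf).abs.aestronglyMeasurable ?_
  filter_upwards with u
  simpa only [Real.norm_eq_abs, abs_abs] using hM _ _

theorem integral_abs_sub_comp_add_le_mul_length (hM : ∀ x y, |f x - f y| ≤ M) (hab : a ≤ b) :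
    ∫ u in a..b, |f (u + ρ) - f u| ≤ M * (b - a) := by
  calc ∫ u in a..b, |f (u + ρ) - f u|
      ≤ ‖∫ u in a..b, |f (u + ρ) - f u|‖ := le_abs_self _
    _ ≤ M * |b - a| := intervalIntegral.norm_integral_le_of_norm_le_const fun u _ => by
        simpa only [Real.norm_eq_abs, abs_abs] using hM _ _
    _ = M * (b - a) := by rw [abs_of_nonneg (sub_nonneg.mpr hab)]

theorem integral_abs_sub_comp_add_eq_zero_of_ae_eq_const
    (hconst : ∃ v, ∀ᵐ u : ℝ, u ∈ Ioo a b → f u = v) (hρ : 0 ≤ ρ) (hρab : ρ ≤ b - a) :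
    ∫ u in a..(b - ρ), |f (u + ρ) - f u| = 0 := by
  obtain ⟨v, hv⟩ := hconst
  have hv_shift : ∀ᵐ u : ℝ, u + ρ ∈ Ioo a b → f (u + ρ) = v :=
    (measurePreserving_add_right volume ρ).quasiMeasurePreserving.ae hv
  have hne : ∀ᵐ u : ℝ, u ≠ b - ρ := by simp [ae_iff]
  refine intervalIntegral.integral_zero_ae ?_
  filter_upwards [hv, hv_shift, hne] with u hu hu_shift hu_ne hmem
  rw [uIoc_of_le (by linarith)] at hmem
  have hlt : u < b - ρ := lt_of_le_of_ne hmem.2 hu_ne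
  rw [hu_shift ⟨by linarith [hmem.1], by linarith⟩, hu ⟨hmem.1, by linarith⟩, sub_self,
    abs_zero]

theorem integral_abs_sub_comp_add_le_mul_shift (hf : Measurable f)
    (hM : ∀ x y, |f x - f y| ≤ M) (hconst : ∃ v, ∀ᵐ u : ℝ, u ∈ Ioo a b → f u = v)
    (hρ : 0 ≤ ρ) (hρab : ρ ≤ b - a) :
    ∫ u in a..b, |f (u + ρ) - f u| ≤ M * ρ := by
  rw [← intervalIntegral.integral_add_adjacent_intervals
      (intervalIntegrable_abs_sub_comp_add hf hM a (b - ρ) ρ)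
      (intervalIntegrable_abs_sub_comp_add hf hM (b - ρ) b ρ),
    integral_abs_sub_comp_add_eq_zero_of_ae_eq_const hconst hρ hρab, zero_add]
  simpa using integral_abs_sub_comp_add_le_mul_length (a := b - ρ) (b := b) (ρ := ρ) hM (by linarith)

end ShiftDifference

theorem abs_indicator_one_sub_le (E : Set ℝ) (x y : ℝ) :
    |E.indicator (fun _ => (1 : ℝ)) x - E.indicator (fun _ => (1 : ℝ)) y| ≤ 1 := by
  have h0 : ∀ z, 0 ≤ E.indicator (fun _ => (1 : ℝ)) z := fun _ =>
    indicator_nonneg (fun _ _ => zero_le_one) _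
  have h1 : ∀ z, E.indicator (fun _ => (1 : ℝ)) z ≤ 1 := fun _ =>
    indicator_apply_le' (fun _ => le_rfl) (fun _ => zero_le_one)
  exact abs_sub_le_of_nonneg_of_le (h0 x) (h1 x) (h0 y) (h1 y)

/-- If `χ_E` is a.e. constant on `(s⁻, s)` (as holds between two consecutive
boundary points of a set of locally finite perimeter in `ℝ`), then for `ρ > 0`
one has `∫_{s⁻}^{s} |χ_E(u+ρ) - χ_E(u)| du ≤ min(ρ, s - s⁻)`. -/
theorem stmt_1 (E : Set ℝ) (hE : MeasurableSet E) (sm s ρ : ℝ)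
    (hlt : sm < s) (hρ : 0 < ρ)
    (hconst : ∃ v : ℝ, ∀ᵐ u : ℝ, u ∈ Set.Ioo sm s → E.indicator (fun _ => (1 : ℝ)) u = v) :
    ∫ u in sm..s, |E.indicator (fun _ => (1 : ℝ)) (u + ρ) - E.indicator (fun _ => (1 : ℝ)) u|
      ≤ min ρ (s - sm) := by
  have hχ := abs_indicator_one_sub_le E
  have hχ_meas : Measurable (E.indicator fun _ => (1 : ℝ)) := measurable_const.indicator hE
  have hlength := integral_abs_sub_comp_add_le_mul_length (ρ := ρ) hχ hlt.le
  rw [one_mul] at hlength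
  refine le_min ?_ hlength
  rcases le_or_gt ρ (s - sm) with hρs | hsρ
  · simpa using integral_abs_sub_comp_add_le_mul_shift hχ_meas hχ hconst hρ.le hρs
  · linarith
end

section
/- Let K̂ : ℝ → [0,∞) be integrable with ∫_ℝ |ρ| K̂(ρ) dρ < ∞, let L > 0, and let E ⊂ ℝ be an L-periodic set of locally finite perimeter. Then ∫_0^L ∫_ℝ |χ_E(u + ρ) − χ_E(u)| K̂(ρ) dρ du ≤ Per(E, [0,L)) · ∫_ℝ |ρ| K̂(ρ) dρ, where Per(E, [0,L)) = #(∂E ∩ [0,L)) is the number of boundary points of E in one period. -/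
/-!
If `u + ρ` and `u` lie on different sides of `E`, the segment between them contains a boundary
point `b` of `E`, so `u ∈ [b - ρ, b]`. By periodicity every such interval is an `Lℤ`-translate of
one with `b ∈ ∂E ∩ [0, L)`, and since `[0, L)` is a fundamental domain of `Lℤ`, the union of the
translates of an interval meets `[0, L)` in measure at most its length `|ρ|`. Hence the `u ∈ [0, L)`
with `χ_E(u + ρ) ≠ χ_E(u)` have measure at most `#(∂E ∩ [0, L)) |ρ|`; integrate against `K̂(ρ)`
and swap the integrals by Tonelli.
-/

open MeasureTheory Set
open scoped symmDiff Pointwise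

theorem IsPreconnected.inter_frontier_nonempty {α : Type*} [TopologicalSpace α] {s t : Set α}
    (hs : IsPreconnected s) (hst : (s ∩ t).Nonempty) (hst' : (s \ t).Nonempty) :
    (s ∩ frontier t).Nonempty := by
  by_contra! h
  have hcover : s ⊆ interior t ∪ interior tᶜ := by
    intro x hx
    by_cases hcl : x ∈ closure t
    · exact .inl (by_contra fun hint => h.subset ⟨hx, hcl, hint⟩)
    · exact .inr (interior_compl (s := t) ▸ hcl)
  obtain ⟨x, hxs, hxt⟩ := hst
  obtain ⟨y, hys, hyt⟩ := hst'
  obtain ⟨z, -, hzt, hzt'⟩ := hs _ _ isOpen_interior isOpen_interior hcover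
    ⟨x, hxs, (hcover hxs).resolve_right fun h' => interior_subset h' hxt⟩
    ⟨y, hys, (hcover hys).resolve_left fun h' => hyt (interior_subset h')⟩
  exact interior_subset hzt' (interior_subset hzt)

theorem Function.Periodic.mem_frontier {α : Type*} [TopologicalSpace α] [AddGroup α]
    [ContinuousAdd α] {E : Set α} {c : α} (h : Function.Periodic (· ∈ E) c) :
    Function.Periodic (· ∈ frontier E) c := by
  have hE : (· + c) ⁻¹' E = E := ext fun x => (h x).to_iff
  intro x
  have hfr := (Homeomorph.addRight c).preimage_frontier E
  rw [Homeomorph.coe_addRight, hE] at hfr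
  exact congrArg (x ∈ ·) hfr

theorem isAddFundamentalDomain_Ico {T : ℝ} (hT : 0 < T) (t : ℝ)
    (μ : Measure ℝ := by volume_tac) :
    IsAddFundamentalDomain (AddSubgroup.zmultiples T) (Ico t (t + T)) μ := by
  refine IsAddFundamentalDomain.mk' nullMeasurableSet_Ico fun x => ?_
  have : Function.Bijective (codRestrict (fun n : ℤ => n • T) (AddSubgroup.zmultiples T) _) :=
    (Equiv.ofInjective (fun n : ℤ => n • T) (zsmul_left_strictMono hT).injective).bijective
  refine this.existsUnique_iff.2 ?_
  simpa only [add_comm x] using! existsUnique_add_zsmul_mem_Ico hT x t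

theorem MeasureTheory.IsAddFundamentalDomain.measure_iUnion_vadd_inter_le {G α : Type*}
    [AddGroup G] [Countable G] [AddAction G α] [MeasurableSpace α] [MeasurableConstVAdd G α]
    {μ : Measure α} [VAddInvariantMeasure G α μ] {s : Set α} (h : IsAddFundamentalDomain G s μ) (t : Set α) :
    μ ((⋃ g : G, g +ᵥ t) ∩ s) ≤ μ t := by
  rw [iUnion_inter, h.measure_eq_tsum t]
  exact measure_iUnion_le _

theorem symmDiff_preimage_add_subset {E : Set ℝ} {L : ℝ} (hL : 0 < L)
    (hper : Function.Periodic (· ∈ E) L) (ρ : ℝ) :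
    ((· + ρ) ⁻¹' E) ∆ E ⊆
      ⋃ b ∈ frontier E ∩ Ico 0 L, ⋃ g : AddSubgroup.zmultiples L, g +ᵥ uIcc (b - ρ) b := by
  intro u hu
  have hsep : (uIcc u (u + ρ) ∩ E).Nonempty ∧ (uIcc u (u + ρ) \ E).Nonempty := by
    rcases mem_symmDiff.1 hu with ⟨h₁, h₂⟩ | ⟨h₁, h₂⟩
    · exact ⟨⟨u + ρ, right_mem_uIcc, h₁⟩, ⟨u, left_mem_uIcc, h₂⟩⟩
    · exact ⟨⟨u, left_mem_uIcc, h₁⟩, ⟨u + ρ, right_mem_uIcc, h₂⟩⟩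
  obtain ⟨b, hbu, hbE⟩ := isPreconnected_uIcc.inter_frontier_nonempty hsep.1 hsep.2
  obtain ⟨m, hm, -⟩ := existsUnique_sub_zsmul_mem_Ico hL b 0
  rw [zero_add] at hm
  have hb₀ : b - m • L ∈ frontier E := (hper.mem_frontier.sub_zsmul_eq m).symm ▸ hbE
  refine mem_biUnion ⟨hb₀, hm⟩ (mem_iUnion.2 ⟨⟨m • L, AddSubgroup.zsmul_mem_zmultiples L m⟩, ?_⟩)
  refine ⟨u - m • L, ?_, by simp [AddSubgroup.vadd_def]⟩
  rcases mem_uIcc.1 hbu with ⟨h₁, h₂⟩ | ⟨h₁, h₂⟩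
  · exact mem_uIcc.2 (.inl ⟨by linarith, by linarith⟩)
  · exact mem_uIcc.2 (.inr ⟨by linarith, by linarith⟩)

theorem volume_symmDiff_preimage_add_inter_Ico_le {E : Set ℝ} {L : ℝ} (hL : 0 < L)
    (hper : Function.Periodic (· ∈ E) L) (hfin : (frontier E ∩ Ico 0 L).Finite) (ρ : ℝ) :
    volume (((· + ρ) ⁻¹' E) ∆ E ∩ Ico 0 L) ≤ (frontier E ∩ Ico 0 L).ncard * ‖ρ‖ₑ := by
  have hdom := isAddFundamentalDomain_Ico hL 0
  rw [zero_add] at hdom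
  calc volume (((· + ρ) ⁻¹' E) ∆ E ∩ Ico 0 L)
      ≤ volume (⋃ b ∈ hfin.toFinset,
          (⋃ g : AddSubgroup.zmultiples L, g +ᵥ uIcc (b - ρ) b) ∩ Ico 0 L) := by
        refine measure_mono ?_
        simp only [← iUnion₂_inter, Finite.mem_toFinset]
        exact inter_subset_inter_left _ (symmDiff_preimage_add_subset hL hper ρ)
    _ ≤ ∑ b ∈ hfin.toFinset, volume (uIcc (b - ρ) b) :=
        (measure_biUnion_finset_le _ _).trans
          (Finset.sum_le_sum fun b _ => hdom.measure_iUnion_vadd_inter_le _)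
    _ = (frontier E ∩ Ico 0 L).ncard * ‖ρ‖ₑ := by
        simp [Real.volume_interval, ncard_eq_toFinset_card _ hfin, Real.enorm_eq_ofReal_abs]

theorem abs_indicator_one_sub_indicator_one {α : Type*} (s t : Set α) (x : α) :
    |s.indicator (1 : α → ℝ) x - t.indicator 1 x| = (s ∆ t).indicator 1 x := by
  by_cases hs : x ∈ s <;> by_cases ht : x ∈ t <;> simp [hs, ht, mem_symmDiff]

theorem AEMeasurable.of_abs_mul {μ : Measure ℝ} [NullSingletonClass μ] {f : ℝ → ℝ}
    (hf : AEMeasurable (fun x => |x| * f x) μ) : AEMeasurable f μ := by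
  refine (hf.div measurable_abs.aemeasurable).congr ?_
  filter_upwards [μ.ae_ne 0] with x hx
  exact mul_div_cancel_left₀ _ (abs_ne_zero.2 hx)

theorem integral_integral_le_of_lintegral_lintegral_enorm_le {α β : Type*} [MeasurableSpace α]
    [MeasurableSpace β] {μ : Measure α} {ν : Measure β} {f : α → β → ℝ} {c : ℝ} (hc : 0 ≤ c)
    (h : ∫⁻ x, ∫⁻ y, ‖f x y‖ₑ ∂ν ∂μ ≤ ENNReal.ofReal c) :
    ∫ x, ∫ y, f x y ∂ν ∂μ ≤ c := by
  have hle := (enorm_integral_le_lintegral_enorm _).trans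
    ((lintegral_mono fun x => enorm_integral_le_lintegral_enorm (f x)).trans h)
  rw [Real.enorm_eq_ofReal_abs, ENNReal.ofReal_le_ofReal_iff hc] at hle
  exact (le_abs_self _).trans hle

theorem setLIntegral_enorm_indicator_add_sub_mul_le {E : Set ℝ} {L : ℝ} (hL : 0 < L)
    (hE : MeasurableSet E) (hper : Function.Periodic (· ∈ E) L)
    (hfin : (frontier E ∩ Ico 0 L).Finite) (ρ c : ℝ) :
    ∫⁻ u in Ico 0 L, ‖|E.indicator 1 (u + ρ) - E.indicator (1 : ℝ → ℝ) u| * c‖ₑ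
      ≤ (frontier E ∩ Ico 0 L).ncard * ‖ρ‖ₑ * ‖c‖ₑ := by
  have hD : MeasurableSet (((· + ρ) ⁻¹' E) ∆ E) :=
    (hE.preimage (measurable_add_const ρ)).symmDiff hE
  calc ∫⁻ u in Ico 0 L, ‖|E.indicator 1 (u + ρ) - E.indicator (1 : ℝ → ℝ) u| * c‖ₑ
      = ∫⁻ u in Ico 0 L, (((· + ρ) ⁻¹' E) ∆ E).indicator (fun _ => ‖c‖ₑ) u := by
        refine lintegral_congr fun u => ?_
        change ‖|((· + ρ) ⁻¹' E).indicator 1 u - E.indicator 1 u| * c‖ₑ = _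
        rw [abs_indicator_one_sub_indicator_one]
        by_cases hu : u ∈ ((· + ρ) ⁻¹' E) ∆ E <;> simp [hu]
    _ = volume (((· + ρ) ⁻¹' E) ∆ E ∩ Ico 0 L) * ‖c‖ₑ := by
        rw [lintegral_indicator_const hD, Measure.restrict_apply hD, mul_comm]
    _ ≤ (frontier E ∩ Ico 0 L).ncard * ‖ρ‖ₑ * ‖c‖ₑ := by
        gcongr
        exact volume_symmDiff_preimage_add_inter_Ico_le hL hper hfin ρ

theorem stmt_12_general (Khat : ℝ → ℝ) (hK0 : ∀ ρ : ℝ, 0 ≤ Khat ρ)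
    (hKmom : Integrable (fun ρ => |ρ| * Khat ρ))
    (L : ℝ) (hL : 0 < L) (E : Set ℝ) (hE : MeasurableSet E)
    (hper : ∀ x : ℝ, x + L ∈ E ↔ x ∈ E)
    (hfin : (frontier E ∩ Set.Ico 0 L).Finite) :
    ∫ u in Set.Ico (0:ℝ) L, ∫ ρ : ℝ,
        |E.indicator (fun _ => (1:ℝ)) (u + ρ) - E.indicator (fun _ => (1:ℝ)) u| * Khat ρ
      ≤ ((frontier E ∩ Set.Ico 0 L).ncard : ℝ) * ∫ ρ : ℝ, |ρ| * Khat ρ := by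
  set N := (frontier E ∩ Ico 0 L).ncard
  have hKmom_nonneg (ρ : ℝ) : 0 ≤ |ρ| * Khat ρ := mul_nonneg (abs_nonneg ρ) (hK0 ρ)
  have hχ : Measurable (E.indicator (1 : ℝ → ℝ)) := measurable_one.indicator hE
  refine integral_integral_le_of_lintegral_lintegral_enorm_le
    (mul_nonneg N.cast_nonneg (integral_nonneg hKmom_nonneg)) ?_
  calc _ = ∫⁻ ρ, ∫⁻ u in Ico 0 L,
        ‖|E.indicator 1 (u + ρ) - E.indicator (1 : ℝ → ℝ) u| * Khat ρ‖ₑ :=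
        lintegral_lintegral_swap
          (((hχ.comp measurable_add).sub (hχ.comp measurable_fst)).abs.aemeasurable.mul
            hKmom.aemeasurable.of_abs_mul.comp_snd).enorm
    _ ≤ ∫⁻ ρ, N * ‖|ρ| * Khat ρ‖ₑ := lintegral_mono fun ρ => by
        rw [enorm_mul, Real.enorm_abs, ← mul_assoc]
        exact setLIntegral_enorm_indicator_add_sub_mul_le hL hE (fun x => propext (hper x))
          hfin ρ (Khat ρ)
    _ = ENNReal.ofReal (N * ∫ ρ, |ρ| * Khat ρ) := by
        rw [lintegral_const_mul' _ _ (ENNReal.natCast_ne_top N),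
          ← ofReal_integral_norm_eq_lintegral_enorm hKmom, ENNReal.ofReal_mul N.cast_nonneg,
          ENNReal.ofReal_natCast]
        simp_rw [Real.norm_of_nonneg (hKmom_nonneg _)]

/-- For an `L`-periodic set `E ⊂ ℝ` of locally finite perimeter (finitely many
boundary points per period) and a nonnegative integrable kernel `K̂` with finite
first moment,
`∫_0^L ∫_ℝ |χ_E(u+ρ) − χ_E(u)| K̂(ρ) dρ du ≤ #(∂E ∩ [0,L)) · ∫_ℝ |ρ| K̂(ρ) dρ`. -/
theorem stmt_12 (Khat : ℝ → ℝ) (hK0 : ∀ ρ : ℝ, 0 ≤ Khat ρ)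
    (hKint : Integrable Khat) (hKmom : Integrable (fun ρ => |ρ| * Khat ρ))
    (L : ℝ) (hL : 0 < L) (E : Set ℝ) (hE : MeasurableSet E)
    (hper : ∀ x : ℝ, x + L ∈ E ↔ x ∈ E)
    (hfin : (frontier E ∩ Set.Ico 0 L).Finite) :
    ∫ u in Set.Ico (0:ℝ) L, ∫ ρ : ℝ,
        |E.indicator (fun _ => (1:ℝ)) (u + ρ) - E.indicator (fun _ => (1:ℝ)) u| * Khat ρ
      ≤ ((frontier E ∩ Set.Ico 0 L).ncard : ℝ) * ∫ ρ : ℝ, |ρ| * Khat ρ :=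
  stmt_12_general Khat hK0 hKmom L hL E hE hper hfin
end
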